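/- For all α ∈ Π and all integers n ≥ 0, the divided-power operators satisfy ε_α^{[n]}(P_𝒵(λ)) ⊆ P_𝒵(λ) and φ_α^{[n]}(P_𝒵(λ)) ⊆ P_𝒵(λ). -/

import Mathlib

/-!
Path model `P_𝒬(λ)` with divided powers `ε_α^{[n]} = ε_αⁿ/[n]_α!`, `φ_α^{[n]} = φ_αⁿ/[n]_α!`.
`P_𝒵(λ)` is the `𝒵 = ℤ[v,v⁻¹]`-lattice spanned by the normalized paths `⟨δ⟩ = (1/δ^!)·δ`.

STATEMENT: for all `α ∈ Π` and `n ≥ 0`, the operators `ε_α^{[n]}` and `φ_α^{[n]}`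
preserve `P_𝒵(λ)`.
-/

noncomputable section

/-- `𝒵 = ℤ[v,v⁻¹]` realized as a subalgebra of `𝒬 = ℚ(v)`. -/
def ZZ : Subalgebra ℤ (RatFunc ℚ) := Algebra.adjoin ℤ {RatFunc.X, RatFunc.X⁻¹}

/-- The quantum integer `[n]_{v^d}` in `ℚ(v)`. -/
def qd (d : ℕ) (n : ℤ) : RatFunc ℚ :=
  (RatFunc.X ^ ((d : ℤ) * n) - RatFunc.X ^ (-((d : ℤ) * n))) /
    (RatFunc.X ^ (d : ℤ) - RatFunc.X ^ (-(d : ℤ)))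

/-- The quantum factorial `[r]!_{v^d}`. -/
def qfacd (d r : ℕ) : RatFunc ℚ := ∏ i ∈ Finset.range r, qd d ((i : ℤ) + 1)

/-- The quantum binomial coefficient `qbinom(n,r)` in the variable `v^d`. -/
def qbinomd (d : ℕ) (n : ℤ) (r : ℕ) : RatFunc ℚ :=
  (∏ i ∈ Finset.range r, qd d (n - (i : ℤ))) / qfacd d r

variable {X : Type*} [AddCommGroup X] {Pi : Type*} [DecidableEq Pi]

/-- The height of a path: the sum of its entries, as an element of the weight lattice. -/
def hgt (root : Pi → X) (δ : List Pi) : X := (δ.map root).sum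

/-- The operator `φ_α`: prepending `α` to a path, extended linearly. -/
def phiOp (α : Pi) : Module.End (RatFunc ℚ) (List Pi →₀ RatFunc ℚ) :=
  Finsupp.lmapDomain (RatFunc ℚ) (RatFunc ℚ) (List.cons α)

/-- `ε_α` on basis paths. -/
def epsB (root : Pi → X) (pair : Pi → X →+ ℤ) (dd : Pi → ℕ) (lam : X) (α : Pi) :
    List Pi → (List Pi →₀ RatFunc ℚ)
  | [] => 0
  | β :: t =>
      (if β = α then Finsupp.single t (qd (dd α) (pair α (lam - hgt root t))) else 0)
        + Finsupp.mapDomain (List.cons β) (epsB root pair dd lam α t)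

/-- The operator `ε_α`, the linear extension of `epsB`. -/
def epsOp (root : Pi → X) (pair : Pi → X →+ ℤ) (dd : Pi → ℕ) (lam : X) (α : Pi) :
    Module.End (RatFunc ℚ) (List Pi →₀ RatFunc ℚ) :=
  Finsupp.linearCombination (RatFunc ℚ) (epsB root pair dd lam α)

/-- The divided power `ε_α^{[n]} = ε_α^n / [n]_α!`. -/
def epsDP (root : Pi → X) (pair : Pi → X →+ ℤ) (dd : Pi → ℕ) (lam : X) (α : Pi) (n : ℕ) :
    Module.End (RatFunc ℚ) (List Pi →₀ RatFunc ℚ) :=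
  (qfacd (dd α) n)⁻¹ • (epsOp root pair dd lam α) ^ n

/-- The divided power `φ_α^{[n]} = φ_α^n / [n]_α!`. -/
def phiDP (dd : Pi → ℕ) (α : Pi) (n : ℕ) :
    Module.End (RatFunc ℚ) (List Pi →₀ RatFunc ℚ) :=
  (qfacd (dd α) n)⁻¹ • (phiOp α) ^ n

/-- `ε_γ = ε_{γ₁} ∘ ⋯ ∘ ε_{γ_m}` for a path `γ`. -/
def epsPath (root : Pi → X) (pair : Pi → X →+ ℤ) (dd : Pi → ℕ) (lam : X) (γ : List Pi) :
    Module.End (RatFunc ℚ) (List Pi →₀ RatFunc ℚ) :=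
  (γ.map (epsOp root pair dd lam)).prod

/-- `φ_γ = φ_{γ₁} ∘ ⋯ ∘ φ_{γ_m}` for a path `γ`. -/
def phiPath (γ : List Pi) : Module.End (RatFunc ℚ) (List Pi →₀ RatFunc ℚ) :=
  (γ.map phiOp).prod

open Classical in
/-- The value `b_λ(δ,γ)` on basis paths. -/
def bentryQ (root : Pi → X) (pair : Pi → X →+ ℤ) (dd : Pi → ℕ) (lam : X) (δ γ : List Pi) :
    RatFunc ℚ :=
  if hgt root δ = hgt root γ then
    (epsPath root pair dd lam δ.reverse (Finsupp.single γ 1)) [] else 0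

/-- The bilinear form `b_λ` on `P_𝒬(λ)`. -/
def bformQ (root : Pi → X) (pair : Pi → X →+ ℤ) (dd : Pi → ℕ) (lam : X)
    (x y : List Pi →₀ RatFunc ℚ) : RatFunc ℚ :=
  x.sum fun δ cδ => y.sum fun γ cγ => cδ * cγ * bentryQ root pair dd lam δ γ

/-- Length of the initial run of `α`'s in a list. -/
def runLen (α : Pi) : List Pi → ℕ
  | [] => 0
  | β :: t => if β = α then runLen α t + 1 else 0

/-- The scalar `δ^!`, a product of quantum factorials of run lengths. -/
def pfact (dd : Pi → ℕ) : List Pi → RatFunc ℚ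
  | [] => 1
  | α :: t => qd (dd α) ((runLen α t : ℤ) + 1) * pfact dd t

/-- The normalized basis element `⟨δ⟩ = (1/δ^!)·δ`. -/
def nbasis (dd : Pi → ℕ) (δ : List Pi) : List Pi →₀ RatFunc ℚ :=
  (pfact dd δ)⁻¹ • Finsupp.single δ 1

/-- The lattice `P_𝒵(λ)`: the set of `𝒵`-linear combinations of the `⟨δ⟩`. -/
def latticeP (dd : Pi → ℕ) : Set (List Pi →₀ RatFunc ℚ) :=
  {x | ∃ (s : Finset (List Pi)) (c : List Pi → RatFunc ℚ),
      (∀ δ, c δ ∈ ZZ) ∧ x = ∑ δ ∈ s, c δ • nbasis dd δ}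

/-- The weight space `P_𝒬(λ)_μ`, spanned by the paths of height `λ - μ`. -/
def PQcomp (root : Pi → X) (lam μ : X) : Submodule (RatFunc ℚ) (List Pi →₀ RatFunc ℚ) :=
  Submodule.span (RatFunc ℚ)
    {p | ∃ δ : List Pi, hgt root δ = lam - μ ∧ p = Finsupp.single δ 1}


/-!
A normalized path with leading run `α^r` is a divided power: `⟨α^r ρ⟩ = φ_α^{[r]} ⟨ρ⟩` when `ρ`
does not start with `α`, and in general `φ_α^{[s]} ⟨δ⟩` is a `q`-binomial multiple of `⟨α^s δ⟩`.
So the `φ_α^{[s]}` preserve `P_𝒵(λ)`, and `ε_α^{[n]} ⟨δ⟩` is handled by induction on the length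
of `δ = β^r ρ`. For `β ≠ α`, `ε_α` commutes with `φ_β`. For `β = α`, the relation
`ε_α φ_α = φ_α ε_α + [⟨μ, α^∨⟩]_α` on the weight space `P_𝒬(λ)_μ` gives, exactly as for `U_q(sl₂)`,
`ε_α^{[n]} φ_α^{[s]} = ∑_t [⟨μ, α^∨⟩ + n - s choose t]_α φ_α^{[s-t]} ε_α^{[n-t]}`,
whose coefficients lie in `𝒵`.
-/

lemma RatFunc.intDegree_X_zpow {K : Type*} [Field K] (k : ℤ) :
    intDegree (RatFunc.X ^ k : RatFunc K) = k := by
  have hX : (RatFunc.X : RatFunc K) ≠ 0 := RatFunc.X_ne_zero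
  induction k using Int.induction_on with
  | zero => simp
  | succ k ih => rw [zpow_add_one₀ hX, intDegree_mul (zpow_ne_zero _ hX) hX, ih, intDegree_X]
  | pred k ih =>
    rw [zpow_sub_one₀ hX, intDegree_mul (zpow_ne_zero _ hX) (inv_ne_zero hX), ih,
      intDegree_inv, intDegree_X, sub_eq_add_neg]

lemma RatFunc.X_zpow_sub_X_zpow_neg_ne_zero {K : Type*} [Field K] {e : ℤ} (he : e ≠ 0) :
    (RatFunc.X : RatFunc K) ^ e - RatFunc.X ^ (-e) ≠ 0 := fun h => by
  have := congrArg intDegree (sub_eq_zero.mp h)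
  rw [intDegree_X_zpow, intDegree_X_zpow] at this
  omega

lemma X_zpow_mem_ZZ (k : ℤ) : (RatFunc.X : RatFunc ℚ) ^ k ∈ ZZ := by
  have hX : (RatFunc.X : RatFunc ℚ) ≠ 0 := RatFunc.X_ne_zero
  induction k using Int.induction_on with
  | zero => rw [zpow_zero]; exact ZZ.one_mem
  | succ k ih => rw [zpow_add_one₀ hX]; exact mul_mem ih (Algebra.subset_adjoin (by simp))
  | pred k ih => rw [zpow_sub_one₀ hX]; exact mul_mem ih (Algebra.subset_adjoin (by simp))

section QuantumIntegers

variable {d : ℕ}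

lemma qd_zero : qd d 0 = 0 := by simp [qd]

lemma qd_one (hd : d ≠ 0) : qd d 1 = 1 := by
  rw [qd, mul_one, div_self (RatFunc.X_zpow_sub_X_zpow_neg_ne_zero (by exact_mod_cast hd))]

lemma qd_add (a b : ℤ) :
    qd d (a + b) = RatFunc.X ^ ((d : ℤ) * b) * qd d a + RatFunc.X ^ (-((d : ℤ) * a)) * qd d b := by
  have hX : (RatFunc.X : RatFunc ℚ) ≠ 0 := RatFunc.X_ne_zero
  rw [qd, qd, qd, ← mul_div_assoc, ← mul_div_assoc, ← add_div, mul_add, neg_add,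
    zpow_add₀ hX, zpow_add₀ hX]
  ring_nf

lemma qd_ne_zero (hd : d ≠ 0) {n : ℤ} (hn : n ≠ 0) : qd d n ≠ 0 :=
  div_ne_zero (RatFunc.X_zpow_sub_X_zpow_neg_ne_zero (mul_ne_zero (by exact_mod_cast hd) hn))
    (RatFunc.X_zpow_sub_X_zpow_neg_ne_zero (by exact_mod_cast hd))

lemma qd_add_one_mul (hd : d ≠ 0) (a b : ℤ) :
    qd d (a + 1) * qd d b = qd d a * qd d (b + 1) + qd d (b - a) := by
  have hX : (RatFunc.X : RatFunc ℚ) ≠ 0 := RatFunc.X_ne_zero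
  have hb := qd_add (d := d) a (b - a)
  have hb1 := qd_add (d := d) (a + 1) (b - a)
  have ha1 := qd_add (d := d) 1 a
  rw [add_sub_cancel] at hb
  rw [show a + 1 + (b - a) = b + 1 by ring] at hb1
  rw [add_comm, qd_one hd, mul_one] at ha1
  have h0 : (RatFunc.X : RatFunc ℚ) ^ (-((d : ℤ) * a)) * RatFunc.X ^ ((d : ℤ) * a) = 1 := by
    rw [← zpow_add₀ hX, neg_add_cancel, zpow_zero]
  have h1 : (RatFunc.X : RatFunc ℚ) ^ (-((d : ℤ) * a)) * RatFunc.X ^ (-((d : ℤ) * 1))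
      = RatFunc.X ^ (-((d : ℤ) * (a + 1))) := by
    rw [← zpow_add₀ hX]; ring_nf
  linear_combination qd d (a + 1) * hb - qd d a * hb1
    + qd d (b - a) * (RatFunc.X ^ (-((d : ℤ) * a)) * ha1 + h0 + qd d a * h1)

end QuantumIntegers

section QuantumBinomials

open Finset

variable {d : ℕ}

lemma qfacd_succ (r : ℕ) : qfacd d (r + 1) = qfacd d r * qd d (r + 1) :=
  prod_range_succ _ _

lemma qfacd_ne_zero (hd : d ≠ 0) (r : ℕ) : qfacd d r ≠ 0 :=
  prod_ne_zero_iff.mpr fun _ _ => qd_ne_zero hd (by omega)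

lemma qbinomd_zero_right (m : ℤ) : qbinomd d m 0 = 1 := by
  simp [qbinomd, qfacd]

lemma qbinomd_zero_succ (t : ℕ) : qbinomd d 0 (t + 1) = 0 := by
  rw [qbinomd, prod_range_succ', Nat.cast_zero, sub_zero, qd_zero, mul_zero, zero_div]

lemma qd_succ_mul_qbinomd_succ (hd : d ≠ 0) (m : ℤ) (t : ℕ) :
    qd d (t + 1) * qbinomd d m (t + 1) = qd d (m - t) * qbinomd d m t := by
  have := qfacd_ne_zero hd t
  have := qd_ne_zero hd (n := t + 1) (by omega)
  rw [qbinomd, qbinomd, qfacd_succ, prod_range_succ]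
  field_simp

lemma qd_succ_mul_qbinomd_succ' (hd : d ≠ 0) (m : ℤ) (t : ℕ) :
    qd d (t + 1) * qbinomd d m (t + 1) = qd d m * qbinomd d (m - 1) t := by
  have := qfacd_ne_zero hd t
  have := qd_ne_zero hd (n := t + 1) (by omega)
  have hprod : ∏ i ∈ range (t + 1), qd d (m - i) = qd d m * ∏ i ∈ range t, qd d (m - 1 - i) := by
    rw [prod_range_succ', Nat.cast_zero, sub_zero, mul_comm]
    congr 1
    exact prod_congr rfl fun i _ => by push_cast; ring_nf
  rw [qbinomd, qbinomd, qfacd_succ, hprod]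
  field_simp

lemma qbinomd_succ (hd : d ≠ 0) (m : ℤ) (t : ℕ) :
    qbinomd d m (t + 1) = RatFunc.X ^ ((d : ℤ) * (m - 1 - t)) * qbinomd d (m - 1) t
      + RatFunc.X ^ (-((d : ℤ) * (t + 1))) * qbinomd d (m - 1) (t + 1) := by
  have ht := qd_ne_zero hd (n := t + 1) (by omega)
  have habs := qd_succ_mul_qbinomd_succ' hd m t
  have hstep := qd_succ_mul_qbinomd_succ hd (m - 1) t
  have hm := qd_add (d := d) (t + 1) (m - 1 - t)
  rw [show (t + 1 : ℤ) + (m - 1 - t) = m by ring] at hm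
  refine mul_left_cancel₀ ht ?_
  linear_combination habs + qbinomd d (m - 1) t * hm - RatFunc.X ^ (-((d : ℤ) * (t + 1))) * hstep

lemma qbinomd_mem_ZZ (hd : d ≠ 0) (m : ℤ) (t : ℕ) : qbinomd d m t ∈ ZZ := by
  induction m using Int.induction_on generalizing t with
  | zero =>
    cases t with
    | zero => rw [qbinomd_zero_right]; exact ZZ.one_mem
    | succ t => rw [qbinomd_zero_succ]; exact ZZ.zero_mem
  | succ m ih =>
    cases t with
    | zero => rw [qbinomd_zero_right]; exact ZZ.one_mem
    | succ t =>
      rw [qbinomd_succ hd, add_sub_cancel_right]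
      exact add_mem (mul_mem (X_zpow_mem_ZZ _) (ih t)) (mul_mem (X_zpow_mem_ZZ _) (ih (t + 1)))
  | pred m ih =>
    induction t with
    | zero => rw [qbinomd_zero_right]; exact ZZ.one_mem
    | succ t iht =>
      have hsolve : qbinomd d (-m - 1) (t + 1) = RatFunc.X ^ ((d : ℤ) * (t + 1)) *
          (qbinomd d (-m) (t + 1) - RatFunc.X ^ ((d : ℤ) * (-m - 1 - t)) *
            qbinomd d (-m - 1) t) := by
        rw [qbinomd_succ hd (-m) t, add_sub_cancel_left, ← mul_assoc, ← zpow_add₀ RatFunc.X_ne_zero,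
          add_neg_cancel, zpow_zero, one_mul]
      rw [hsolve]
      exact mul_mem (X_zpow_mem_ZZ _) (sub_mem (ih _) (mul_mem (X_zpow_mem_ZZ _) iht))

lemma prod_qd_mul_qfacd (s r : ℕ) :
    (∏ i ∈ range s, qd d ((s + r : ℤ) - i)) * qfacd d r = qfacd d (s + r) := by
  induction s generalizing r with
  | zero => simp
  | succ s ih =>
    rw [prod_range_succ, mul_assoc, show (s + 1 + r : ℕ) = s + (r + 1) by omega, ← ih,
      qfacd_succ, mul_comm (qfacd d r)]
    push_cast
    ring_nf

lemma qbinomd_natCast_add (hd : d ≠ 0) (s r : ℕ) :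
    qbinomd d (s + r) s = qfacd d (s + r) / (qfacd d s * qfacd d r) := by
  rw [qbinomd, ← prod_qd_mul_qfacd]
  field_simp [qfacd_ne_zero hd]

lemma qbinomd_self (hd : d ≠ 0) (s : ℕ) : qbinomd d s s = 1 := by
  have h := qbinomd_natCast_add hd s 0
  rwa [Nat.cast_zero, add_zero, add_zero, show qfacd d 0 = 1 from prod_range_zero _, mul_one,
    div_self (qfacd_ne_zero hd s)] at h

lemma qd_mul_qbinomd_sub_one_succ (hd : d ≠ 0) (S M : ℤ) (t : ℕ) :
    qd d S * qbinomd d (M - 1) (t + 1)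
      = qd d (S - (t + 1)) * qbinomd d M (t + 1) + qd d (M - S) * qbinomd d (M - 1) t := by
  have hS := qd_add (d := d) (t + 1) (S - (t + 1))
  have hM := qd_add (d := d) (S - (t + 1)) (M - S)
  rw [add_sub_cancel] at hS
  rw [show S - (t + 1) + (M - S) = M - 1 - t by ring] at hM
  have h0 : (RatFunc.X : RatFunc ℚ) ^ ((d : ℤ) * (S - (t + 1)))
      * RatFunc.X ^ (-((d : ℤ) * (S - (t + 1)))) = 1 := by
    rw [← zpow_add₀ RatFunc.X_ne_zero, add_neg_cancel, zpow_zero]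
  have h1 : (RatFunc.X : RatFunc ℚ) ^ ((d : ℤ) * (S - (t + 1))) * RatFunc.X ^ ((d : ℤ) * (M - S))
      = RatFunc.X ^ ((d : ℤ) * (M - 1 - t)) := by
    rw [← zpow_add₀ RatFunc.X_ne_zero]; ring_nf
  linear_combination qbinomd d (M - 1) (t + 1) * hS
    + RatFunc.X ^ ((d : ℤ) * (S - (t + 1))) * qd_succ_mul_qbinomd_succ hd (M - 1) t
    + RatFunc.X ^ ((d : ℤ) * (S - (t + 1))) * qbinomd d (M - 1) t * hM
    - qd d (S - (t + 1)) * qbinomd_succ hd M t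
    + qd d (M - S) * qbinomd d (M - 1) t * h0
    + qd d (S - (t + 1)) * qbinomd d (M - 1) t * h1

lemma sum_qbinomd_smul_pascal {V : Type*} [AddCommGroup V] [Module (RatFunc ℚ) V]
    (hd : d ≠ 0) (s : ℕ) (M : ℤ) (T : ℕ → V) :
    ∑ t ∈ range (s + 1), (qbinomd d M t * qd d (s + 1 - t)) • T t
      + qd d (M - (s + 1)) • ∑ t ∈ range (s + 1), qbinomd d (M - 1) t • T (t + 1)
    = qd d (s + 1) • ∑ t ∈ range (s + 2), qbinomd d (M - 1) t • T t := by
  have hlast : (qbinomd d M (s + 1) * qd d (s + 1 - (s + 1 : ℕ))) • T (s + 1) = 0 := by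
    simp [qd_zero]
  rw [← add_zero (∑ t ∈ range (s + 1), _), ← hlast, ← sum_range_succ,
    sum_range_succ' _ (s + 1), sum_range_succ' _ (s + 1), smul_sum,
    smul_add, smul_sum, add_right_comm, ← sum_add_distrib]
  congr 1
  · refine sum_congr rfl fun t _ => ?_
    rw [smul_smul, smul_smul, ← add_smul, qd_mul_qbinomd_sub_one_succ hd (s + 1) M t]
    push_cast
    ring_nf
  · simp [qbinomd_zero_right]

end QuantumBinomials

section PathModel

open Finset

variable (root : Pi → X) (pair : Pi → X →+ ℤ) (dd : Pi → ℕ) (lam : X)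


omit [DecidableEq Pi] in
lemma hgt_cons (β : Pi) (δ : List Pi) : hgt root (β :: δ) = root β + hgt root δ :=
  List.sum_cons

omit [DecidableEq Pi] in
lemma phiOp_single (β : Pi) (δ : List Pi) (c : RatFunc ℚ) :
    phiOp β (Finsupp.single δ c) = Finsupp.single (β :: δ) c :=
  Finsupp.mapDomain_single

omit [DecidableEq Pi] in
lemma phiOp_pow_single (β : Pi) (s : ℕ) (δ : List Pi) (c : RatFunc ℚ) :
    (phiOp β ^ s) (Finsupp.single δ c) = Finsupp.single (List.replicate s β ++ δ) c := by
  induction s with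
  | zero => rfl
  | succ s ih => rw [pow_succ', Module.End.mul_apply, ih, phiOp_single]; rfl

lemma epsOp_single (α : Pi) (δ : List Pi) (c : RatFunc ℚ) :
    epsOp root pair dd lam α (Finsupp.single δ c) = c • epsB root pair dd lam α δ :=
  Finsupp.linearCombination_single _ _ _

lemma epsOp_single_cons (α β : Pi) (δ : List Pi) :
    epsOp root pair dd lam α (Finsupp.single (β :: δ) 1)
      = (if β = α then Finsupp.single δ (qd (dd α) (pair α (lam - hgt root δ))) else 0)
        + phiOp β (epsOp root pair dd lam α (Finsupp.single δ 1)) := by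
  rw [epsOp_single, epsOp_single, one_smul, one_smul]
  rfl

omit [DecidableEq Pi] in
lemma single_mem_PQcomp (δ : List Pi) :
    Finsupp.single δ 1 ∈ PQcomp root lam (lam - hgt root δ) :=
  Submodule.subset_span ⟨δ, (sub_sub_cancel lam _).symm, rfl⟩

lemma nbasis_mem_PQcomp (δ : List Pi) : nbasis dd δ ∈ PQcomp root lam (lam - hgt root δ) :=
  Submodule.smul_mem _ _ (single_mem_PQcomp root lam δ)

omit [DecidableEq Pi] in
lemma phiOp_mem_PQcomp (β : Pi) {μ : X} {x : List Pi →₀ RatFunc ℚ}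
    (hx : x ∈ PQcomp root lam μ) : phiOp β x ∈ PQcomp root lam (μ - root β) := by
  refine (Submodule.span_le (p := (PQcomp root lam (μ - root β)).comap (phiOp β))).mpr ?_ hx
  rintro _ ⟨δ, hδ, rfl⟩
  refine Submodule.subset_span ⟨β :: δ, ?_, phiOp_single β δ 1⟩
  rw [hgt_cons, hδ]
  abel

omit [DecidableEq Pi] in
lemma phiOp_pow_mem_PQcomp (β : Pi) (s : ℕ) {μ : X} {x : List Pi →₀ RatFunc ℚ}
    (hx : x ∈ PQcomp root lam μ) : (phiOp β ^ s) x ∈ PQcomp root lam (μ - s • root β) := by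
  induction s with
  | zero => simpa using hx
  | succ s ih =>
    rw [pow_succ', Module.End.mul_apply, succ_nsmul, ← sub_sub]
    exact phiOp_mem_PQcomp root lam β ih

lemma epsOp_single_mem_PQcomp (α : Pi) (δ : List Pi) :
    epsOp root pair dd lam α (Finsupp.single δ 1)
      ∈ PQcomp root lam (lam - hgt root δ + root α) := by
  induction δ with
  | nil => rw [epsOp_single, one_smul]; exact zero_mem _
  | cons β δ ih =>
    rw [epsOp_single_cons]
    refine add_mem ?_ ?_
    · split_ifs with hβ
      · subst hβ
        rw [← Finsupp.smul_single_one, hgt_cons, show lam - (root β + hgt root δ) + root β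
          = lam - hgt root δ by abel]
        exact Submodule.smul_mem _ _ (single_mem_PQcomp root lam δ)
      · exact zero_mem _
    · convert phiOp_mem_PQcomp root lam β ih using 2
      rw [hgt_cons]
      abel

lemma epsOp_mem_PQcomp (α : Pi) {μ : X} {x : List Pi →₀ RatFunc ℚ}
    (hx : x ∈ PQcomp root lam μ) :
    epsOp root pair dd lam α x ∈ PQcomp root lam (μ + root α) := by
  refine (Submodule.span_le (p := (PQcomp root lam (μ + root α)).comap
    (epsOp root pair dd lam α))).mpr ?_ hx
  rintro _ ⟨δ, hδ, rfl⟩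
  rw [SetLike.mem_coe, Submodule.mem_comap, show μ = lam - hgt root δ by rw [hδ, sub_sub_cancel]]
  exact epsOp_single_mem_PQcomp root pair dd lam α δ

lemma epsOp_phiOp_self (α : Pi) {μ : X} {x : List Pi →₀ RatFunc ℚ}
    (hx : x ∈ PQcomp root lam μ) :
    epsOp root pair dd lam α (phiOp α x)
      = qd (dd α) (pair α μ) • x + phiOp α (epsOp root pair dd lam α x) := by
  have hspan : Set.EqOn ⇑(epsOp root pair dd lam α * phiOp α)
      ⇑(qd (dd α) (pair α μ) • 1 + phiOp α * epsOp root pair dd lam α)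
      (PQcomp root lam μ : Set (List Pi →₀ RatFunc ℚ)) := by
    refine LinearMap.eqOn_span' ?_
    rintro _ ⟨δ, hδ, rfl⟩
    simp only [Module.End.mul_apply, LinearMap.add_apply, LinearMap.smul_apply,
      Module.End.one_apply]
    rw [phiOp_single, epsOp_single_cons, if_pos rfl, hδ, sub_sub_cancel, Finsupp.smul_single_one]
  exact hspan hx

lemma commute_phiOp_epsOp {α β : Pi} (hβα : β ≠ α) :
    Commute (phiOp β) (epsOp root pair dd lam α) := by
  refine Finsupp.lhom_ext fun δ c => ?_
  rw [← Finsupp.smul_single_one]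
  simp only [Module.End.mul_apply, map_smul, phiOp_single, epsOp_single_cons, if_neg hβα,
    zero_add]

lemma epsDP_zero (α : Pi) : epsDP root pair dd lam α 0 = 1 := by
  simp [epsDP, qfacd]

omit [DecidableEq Pi] in
lemma phiDP_zero (β : Pi) : phiDP dd β 0 = 1 := by
  simp [phiDP, qfacd]

omit [DecidableEq Pi] in
lemma phiOp_phiDP {β : Pi} (hd : dd β ≠ 0) (s : ℕ) (x : List Pi →₀ RatFunc ℚ) :
    phiOp β (phiDP dd β s x) = qd (dd β) (s + 1) • phiDP dd β (s + 1) x := by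
  have := qd_ne_zero hd (n := s + 1) (by omega)
  simp only [phiDP, LinearMap.smul_apply, map_smul, smul_smul, pow_succ', Module.End.mul_apply]
  congr 1
  rw [qfacd_succ]
  field_simp

omit [DecidableEq Pi] in
lemma phiOp_phiDP_sub {β : Pi} (hd : dd β ≠ 0) {s t : ℕ} (hts : t ≤ s) (x : List Pi →₀ RatFunc ℚ) :
    phiOp β (phiDP dd β (s - t) x) = qd (dd β) (s + 1 - t) • phiDP dd β (s + 1 - t) x := by
  rw [phiOp_phiDP dd hd, ← Nat.sub_add_comm hts]
  push_cast [hts]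
  ring_nf

omit [DecidableEq Pi] in
lemma phiDP_mem_PQcomp (β : Pi) (s : ℕ) {μ : X} {x : List Pi →₀ RatFunc ℚ}
    (hx : x ∈ PQcomp root lam μ) : phiDP dd β s x ∈ PQcomp root lam (μ - s • root β) :=
  Submodule.smul_mem _ _ (phiOp_pow_mem_PQcomp root lam β s hx)

lemma epsOp_pow_succ_phiOp {α : Pi} (hα : pair α (root α) = 2) (hd : dd α ≠ 0) (n : ℕ) {μ : X}
    {x : List Pi →₀ RatFunc ℚ} (hx : x ∈ PQcomp root lam μ) :
    (epsOp root pair dd lam α ^ (n + 1)) (phiOp α x)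
      = phiOp α ((epsOp root pair dd lam α ^ (n + 1)) x)
        + (qd (dd α) (n + 1) * qd (dd α) (pair α μ + n)) • (epsOp root pair dd lam α ^ n) x := by
  induction n generalizing μ x with
  | zero =>
    rw [zero_add, pow_one, pow_zero, epsOp_phiOp_self root pair dd lam α hx, Nat.cast_zero,
      zero_add, add_zero, qd_one hd, one_mul, add_comm, Module.End.one_apply]
  | succ n ih =>
    have hpow (k : ℕ) (y : List Pi →₀ RatFunc ℚ) :
        (epsOp root pair dd lam α ^ (k + 1)) y = (epsOp root pair dd lam α ^ k)
          (epsOp root pair dd lam α y) := by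
      rw [pow_succ, Module.End.mul_apply]
    rw [hpow (n + 1), epsOp_phiOp_self root pair dd lam α hx, map_add, map_smul,
      ih (epsOp_mem_PQcomp root pair dd lam α hx), ← hpow, ← hpow, add_left_comm, ← add_smul,
      map_add, hα]
    have h := qd_add_one_mul hd (n + 1) (pair α μ + n + 1)
    rw [show pair α μ + n + 1 + 1 = pair α μ + 2 + n by ring, add_sub_add_right_eq_sub,
      add_sub_cancel_right] at h
    congr 2
    push_cast
    linear_combination (norm := ring_nf) -h

lemma epsDP_succ_phiOp {α : Pi} (hα : pair α (root α) = 2) (hd : dd α ≠ 0) (n : ℕ) {μ : X}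
    {x : List Pi →₀ RatFunc ℚ} (hx : x ∈ PQcomp root lam μ) :
    epsDP root pair dd lam α (n + 1) (phiOp α x)
      = phiOp α (epsDP root pair dd lam α (n + 1) x)
        + qd (dd α) (pair α μ + n) • epsDP root pair dd lam α n x := by
  have := qd_ne_zero hd (n := n + 1) (by omega)
  have := qfacd_ne_zero hd n
  simp only [epsDP, LinearMap.smul_apply, epsOp_pow_succ_phiOp root pair dd lam hα hd n hx,
    smul_add, map_smul, smul_smul]
  congr 2
  rw [qfacd_succ]
  field_simp

lemma epsDP_succ_phiDP_succ {α : Pi} (hα : pair α (root α) = 2) (hd : dd α ≠ 0) (m s : ℕ)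
    {μ : X} {x : List Pi →₀ RatFunc ℚ} (hx : x ∈ PQcomp root lam μ) :
    epsDP root pair dd lam α (m + 1) (phiDP dd α (s + 1) x)
      = (qd (dd α) (s + 1))⁻¹ • (phiOp α (epsDP root pair dd lam α (m + 1) (phiDP dd α s x))
          + qd (dd α) (pair α μ + m - 2 * s) • epsDP root pair dd lam α m (phiDP dd α s x)) := by
  rw [← inv_smul_smul₀ (qd_ne_zero hd (n := s + 1) (by omega)) (phiDP dd α (s + 1) x),
    ← phiOp_phiDP dd hd, map_smul,
    epsDP_succ_phiOp root pair dd lam hα hd m (phiDP_mem_PQcomp root dd lam α s hx),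
    map_sub, map_nsmul, hα, show pair α μ - s • 2 + m = pair α μ + m - 2 * s by
      rw [nsmul_eq_mul]; ring]

/- The `if` encodes the convention `ε_α^{[k]} = 0` for `k < 0`, which truncated subtraction
`n - t` cannot express. -/
lemma epsDP_phiDP {α : Pi} (hα : pair α (root α) = 2) (hd : dd α ≠ 0) (s n : ℕ) {μ : X}
    {x : List Pi →₀ RatFunc ℚ} (hx : x ∈ PQcomp root lam μ) :
    epsDP root pair dd lam α n (phiDP dd α s x)
      = ∑ t ∈ range (s + 1), qbinomd (dd α) (pair α μ + n - s) t •
          (if t ≤ n then phiDP dd α (s - t) (epsDP root pair dd lam α (n - t) x) else 0) := by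
  induction s generalizing n with
  | zero => simp [phiDP_zero, qbinomd_zero_right]
  | succ s ih =>
    cases n with
    | zero =>
      rw [sum_eq_single 0 (fun t _ ht => by rw [if_neg (by omega), smul_zero]) (by simp)]
      simp [epsDP_zero, qbinomd_zero_right]
    | succ m =>
      set M : ℤ := pair α μ + (m + 1 : ℕ) - s with hM
      set T : ℕ → List Pi →₀ RatFunc ℚ := fun t =>
        if t ≤ m + 1 then phiDP dd α (s + 1 - t) (epsDP root pair dd lam α (m + 1 - t) x) else 0
      have hT1 : ∀ t ∈ range (s + 1), phiOp α (qbinomd (dd α) M t •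
          if t ≤ m + 1 then phiDP dd α (s - t) (epsDP root pair dd lam α (m + 1 - t) x) else 0)
            = (qbinomd (dd α) M t * qd (dd α) (s + 1 - t)) • T t := by
        intro t ht
        rw [map_smul, mul_smul]
        split_ifs with h <;> simp [T, h, phiOp_phiDP_sub dd hd (mem_range_succ_iff.mp ht)]
      have hT0 : ∀ t ∈ range (s + 1), qbinomd (dd α) (M - 1) t •
          (if t ≤ m then phiDP dd α (s - t) (epsDP root pair dd lam α (m - t) x) else 0)
            = qbinomd (dd α) (M - 1) t • T (t + 1) := by
        simp [T]
      calc epsDP root pair dd lam α (m + 1) (phiDP dd α (s + 1) x)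
          = (qd (dd α) (s + 1))⁻¹ •
              (∑ t ∈ range (s + 1), (qbinomd (dd α) M t * qd (dd α) (s + 1 - t)) • T t
                + qd (dd α) (M - (s + 1)) •
                  ∑ t ∈ range (s + 1), qbinomd (dd α) (M - 1) t • T (t + 1)) := by
            rw [epsDP_succ_phiDP_succ root pair dd lam hα hd m s hx, ih, ih, map_sum, ← hM,
              sum_congr rfl hT1,
              show pair α μ + m - 2 * s = M - (s + 1) by rw [hM]; push_cast; ring,
              show pair α μ + m - s = M - 1 by rw [hM]; push_cast; ring, sum_congr rfl hT0]
        _ = ∑ t ∈ range (s + 1 + 1),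
              qbinomd (dd α) (pair α μ + (m + 1 : ℕ) - (s + 1 : ℕ)) t • T t := by
            rw [sum_qbinomd_smul_pascal hd, inv_smul_smul₀ (qd_ne_zero hd (by omega)),
              show pair α μ + (m + 1 : ℕ) - (s + 1 : ℕ) = M - 1 by rw [hM]; push_cast; ring]

lemma commute_phiDP_epsDP {α β : Pi} (hβα : β ≠ α) (r n : ℕ) :
    Commute (phiDP dd β r) (epsDP root pair dd lam α n) :=
  (((commute_phiOp_epsOp root pair dd lam hβα).pow_pow r n).smul_left _).smul_right _

def latticeZ : Submodule ZZ (List Pi →₀ RatFunc ℚ) := Submodule.span ZZ (Set.range (nbasis dd))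

lemma coe_latticeZ : (latticeZ dd : Set (List Pi →₀ RatFunc ℚ)) = latticeP dd := by
  ext x
  constructor
  · intro hx
    obtain ⟨c, rfl⟩ := Finsupp.mem_span_range_iff_exists_finsupp.mp hx
    exact ⟨c.support, fun δ => c δ, fun δ => (c δ).2, rfl⟩
  · rintro ⟨s, c, hc, rfl⟩
    exact sum_mem fun δ _ =>
      Submodule.smul_mem _ (⟨c δ, hc δ⟩ : ZZ) (Submodule.subset_span ⟨δ, rfl⟩)

lemma smul_mem_latticeZ {z : RatFunc ℚ} (hz : z ∈ ZZ) {x : List Pi →₀ RatFunc ℚ}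
    (hx : x ∈ latticeZ dd) : z • x ∈ latticeZ dd :=
  Submodule.smul_mem _ (⟨z, hz⟩ : ZZ) hx

lemma map_mem_latticeZ (T : Module.End (RatFunc ℚ) (List Pi →₀ RatFunc ℚ))
    (hT : ∀ δ, T (nbasis dd δ) ∈ latticeZ dd) {x : List Pi →₀ RatFunc ℚ}
    (hx : x ∈ latticeZ dd) : T x ∈ latticeZ dd :=
  (Submodule.span_le (p := (latticeZ dd).comap (T.restrictScalars ZZ))).mpr
    (Set.range_subset_iff.mpr hT) hx

lemma runLen_replicate_append (β : Pi) (s : ℕ) (δ : List Pi) :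
    runLen β (List.replicate s β ++ δ) = s + runLen β δ := by
  induction s with
  | zero => simp
  | succ s ih => rw [List.replicate_succ, List.cons_append, runLen, if_pos rfl, ih]; omega

lemma replicate_runLen_append_drop (β : Pi) (δ : List Pi) :
    List.replicate (runLen β δ) β ++ δ.drop (runLen β δ) = δ := by
  induction δ with
  | nil => rfl
  | cons γ δ ih =>
    by_cases h : γ = β
    · subst h
      rw [runLen, if_pos rfl, List.replicate_succ, List.cons_append, List.drop_succ_cons, ih]
    · rw [runLen, if_neg h]; rfl

lemma runLen_drop_runLen (β : Pi) (δ : List Pi) : runLen β (δ.drop (runLen β δ)) = 0 := by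
  induction δ with
  | nil => rfl
  | cons γ δ ih =>
    by_cases h : γ = β
    · subst h; rwa [runLen, if_pos rfl, List.drop_succ_cons]
    · rw [runLen, if_neg h, List.drop_zero, runLen, if_neg h]

lemma pfact_ne_zero (hd : ∀ γ, dd γ ≠ 0) (δ : List Pi) : pfact dd δ ≠ 0 := by
  induction δ with
  | nil => exact one_ne_zero
  | cons γ δ ih => exact mul_ne_zero (qd_ne_zero (hd γ) (by omega)) ih

lemma pfact_replicate_append (β : Pi) (s : ℕ) (δ : List Pi) :
    pfact dd (List.replicate s β ++ δ) * qfacd (dd β) (runLen β δ)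
      = qfacd (dd β) (s + runLen β δ) * pfact dd δ := by
  induction s with
  | zero => rw [List.replicate_zero, List.nil_append, zero_add, mul_comm]
  | succ s ih =>
    rw [List.replicate_succ, List.cons_append, pfact, runLen_replicate_append, mul_assoc, ih,
      show s + 1 + runLen β δ = s + runLen β δ + 1 by omega, qfacd_succ]
    push_cast
    ring

lemma phiDP_nbasis (hd : ∀ γ, dd γ ≠ 0) (β : Pi) (s : ℕ) (δ : List Pi) :
    phiDP dd β s (nbasis dd δ)
      = qbinomd (dd β) (s + runLen β δ) s • nbasis dd (List.replicate s β ++ δ) := by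
  have := pfact_ne_zero dd hd δ
  have := pfact_ne_zero dd hd (List.replicate s β ++ δ)
  have := qfacd_ne_zero (hd β) s
  have := qfacd_ne_zero (hd β) (runLen β δ)
  simp only [phiDP, nbasis, LinearMap.smul_apply, map_smul, phiOp_pow_single, smul_smul]
  congr 1
  rw [qbinomd_natCast_add (hd β)]
  field_simp
  linear_combination pfact_replicate_append dd β s δ

lemma phiDP_mem_latticeZ (hd : ∀ γ, dd γ ≠ 0) (β : Pi) (s : ℕ) {x : List Pi →₀ RatFunc ℚ}
    (hx : x ∈ latticeZ dd) : phiDP dd β s x ∈ latticeZ dd := by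
  refine map_mem_latticeZ dd _ (fun δ => ?_) hx
  rw [phiDP_nbasis dd hd]
  exact smul_mem_latticeZ dd (qbinomd_mem_ZZ (hd β) _ _) (Submodule.subset_span ⟨_, rfl⟩)

lemma nbasis_replicate_append (hd : ∀ γ, dd γ ≠ 0) {β : Pi} {ρ : List Pi} (hρ : runLen β ρ = 0)
    (r : ℕ) : nbasis dd (List.replicate r β ++ ρ) = phiDP dd β r (nbasis dd ρ) := by
  rw [phiDP_nbasis dd hd, hρ, Nat.cast_zero, add_zero, qbinomd_self (hd β), one_smul]

lemma epsDP_nil (α : Pi) (n : ℕ) :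
    epsDP root pair dd lam α (n + 1) (nbasis dd []) = 0 := by
  rw [epsDP, LinearMap.smul_apply, pow_succ, Module.End.mul_apply, nbasis, map_smul, epsOp_single]
  simp [epsB]

lemma epsDP_nbasis_mem_latticeZ (hα : ∀ α, pair α (root α) = 2) (hd : ∀ γ, dd γ ≠ 0) :
    ∀ (δ : List Pi) (α : Pi) (n : ℕ), epsDP root pair dd lam α n (nbasis dd δ) ∈ latticeZ dd
  | [], _, 0 => by
    rw [epsDP_zero]; exact Submodule.subset_span ⟨_, rfl⟩
  | [], α, n + 1 => by
    rw [epsDP_nil]; exact zero_mem _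
  | β :: δ, α, n => by
    set ρ := δ.drop (runLen β δ)
    have hδ : β :: δ = List.replicate (runLen β δ + 1) β ++ ρ :=
      congrArg (β :: ·) (replicate_runLen_append_drop β δ).symm
    have hρ : ∀ α n, epsDP root pair dd lam α n (nbasis dd ρ) ∈ latticeZ dd :=
      epsDP_nbasis_mem_latticeZ hα hd ρ
    rw [hδ, nbasis_replicate_append dd hd (runLen_drop_runLen β δ)]
    by_cases hβα : β = α
    · subst hβα
      rw [epsDP_phiDP root pair dd lam (hα β) (hd β) _ _ (nbasis_mem_PQcomp root dd lam ρ)]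
      refine sum_mem fun t _ => smul_mem_latticeZ dd (qbinomd_mem_ZZ (hd β) _ _) ?_
      split_ifs
      · exact phiDP_mem_latticeZ dd hd β _ (hρ β _)
      · exact zero_mem _
    · rw [← Module.End.mul_apply, ← (commute_phiDP_epsDP root pair dd lam hβα _ n).eq]
      exact phiDP_mem_latticeZ dd hd β _ (hρ α n)
termination_by δ => δ.length
decreasing_by rw [List.length_drop, List.length_cons]; omega

end PathModel

variable (root : Pi → X) (pair : Pi → X →+ ℤ) (dd : Pi → ℕ)

theorem divided_powers_stabilize_lattice
    (hd : ∀ α, dd α ∈ ({1, 2, 3} : Set ℕ))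
    (hpairself : ∀ α, pair α (root α) = 2)
    (lam : X) (α : Pi) (n : ℕ) (x : List Pi →₀ RatFunc ℚ) (hx : x ∈ latticeP dd) :
    epsDP root pair dd lam α n x ∈ latticeP dd ∧ phiDP dd α n x ∈ latticeP dd := by
  have hd0 : ∀ γ, dd γ ≠ 0 := fun γ => by
    have := hd γ
    simp only [Set.mem_insert_iff, Set.mem_singleton_iff] at this
    omega
  rw [← coe_latticeZ] at hx ⊢
  exact ⟨map_mem_latticeZ dd _
      (fun δ => epsDP_nbasis_mem_latticeZ root pair dd lam hpairself hd0 δ α n) hx,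
    phiDP_mem_latticeZ dd hd0 α n hx⟩

end
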